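/- Let (X,d_X), (Y,d_Y) be metric spaces and f : X → Y a coarse (bornologous) map: there exists a nondecreasing function Φ : [0,∞) → [0,∞) with d_Y(f(x),f(x')) ≤ Φ(d_X(x,x')) for all x, x' ∈ X. Then there exists a function c_Y : [0,∞) → [0,∞), concave, strictly increasing, continuous, unbounded, vanishing exactly at 0, and constants A > 0, B ≥ 0 such that, with d_Y' = c_Y ∘ d_Y (a metric), for all x, x' ∈ X: d_Y'(f(x), f(x')) ≤ A·d_X(x,x') + B; that is, f : (X,d_X) → (Y,d_Y') is large scale Lipschitz. -/

import Mathlib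

/-!
The coarse bound `Φ` is inverted by a concave function: for the weights
`w n = (Φ (n + 1) + 1)⁻¹`, the lower envelope `g s = ⨅ n, (n + 1 + w n * s)` of the affine
functions `s ↦ n + 1 + w n * s` is concave, monotone, `1`-Lipschitz and unbounded (the weights
are positive and antitone), and choosing `n = ⌈t⌉₊` gives `g (Φ t) ≤ t + 3`. Then
`c = g - g 0 = g - 1` is concave and vanishes at `0`, hence is subadditive, and being monotone,
concave and unbounded it is strictly increasing; so `c ∘ d_Y` is a metric and
`c (d_Y (f x) (f x')) ≤ c (Φ (d_X x x')) ≤ d_X x x' + 2`.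
-/

open Set

def IsMetric {X : Type*} (d : X → X → ℝ) : Prop :=
  (∀ x y, 0 ≤ d x y) ∧ (∀ x y, (d x y = 0 ↔ x = y)) ∧
  (∀ x y, d x y = d y x) ∧ (∀ x y z, d x z ≤ d x y + d y z)

section Infimum

variable {ι : Type*}

theorem concaveOn_ciInf [Nonempty ι] {E : Type*} [AddCommMonoid E] [Module ℝ E] {s : Set E}
    {F : ι → E → ℝ} (hF : ∀ i, ConcaveOn ℝ s (F i))
    (hbdd : ∀ x ∈ s, BddBelow (range fun i => F i x)) :
    ConcaveOn ℝ s fun x => ⨅ i, F i x := by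
  refine ⟨(hF (Classical.arbitrary ι)).1, fun x hx y hy a b ha hb hab => le_ciInf fun i => ?_⟩
  dsimp only
  calc a • (⨅ i, F i x) + b • ⨅ i, F i y ≤ a • F i x + b • F i y := by
        gcongr
        exacts [ciInf_le (hbdd x hx) i, ciInf_le (hbdd y hy) i]
    _ ≤ F i (a • x + b • y) := (hF i).2 hx hy ha hb hab

theorem monotoneOn_ciInf {α : Type*} [Preorder α] {s : Set α} {F : ι → α → ℝ}
    (hF : ∀ i, MonotoneOn (F i) s) (hbdd : ∀ x ∈ s, BddBelow (range fun i => F i x)) :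
    MonotoneOn (fun x => ⨅ i, F i x) s :=
  fun x hx _ hy hxy => ciInf_mono (hbdd x hx) fun i => hF i hx hy hxy

theorem lipschitzOnWith_ciInf [Nonempty ι] {α : Type*} [PseudoMetricSpace α] {s : Set α}
    {K : NNReal} {F : ι → α → ℝ} (hF : ∀ i, LipschitzOnWith K (F i) s)
    (hbdd : ∀ x ∈ s, BddBelow (range fun i => F i x)) :
    LipschitzOnWith K (fun x => ⨅ i, F i x) s := by
  refine LipschitzOnWith.of_le_add_mul K fun x hx y hy => ?_
  refine sub_le_iff_le_add.mp (le_ciInf fun i => sub_le_iff_le_add.mpr ?_)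
  calc ⨅ i, F i x ≤ F i x := ciInf_le (hbdd x hx) i
    _ ≤ F i y + K * dist x y := by
      have := (hF i).dist_le_mul x hx y hy
      rw [Real.dist_eq] at this
      linarith [le_abs_self (F i x - F i y)]

end Infimum

section Concave

variable {f : ℝ → ℝ}

theorem ConcaveOn.strictMonoOn_of_monotoneOn {a : ℝ} (hf : ConcaveOn ℝ (Ici a) f)
    (hmono : MonotoneOn f (Ici a)) (hunbdd : ¬BddAbove (f '' Ici a)) :
    StrictMonoOn f (Ici a) := by
  intro x hx y hy hxy
  refine (hmono hx hy hxy.le).lt_of_ne fun hfxy => hunbdd ⟨f y, ?_⟩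
  rintro _ ⟨z, hz, rfl⟩
  rcases le_or_gt z y with hzy | hyz
  · exact hmono hz hy hzy
  · -- the secant slope on `[x, y]` is `0`, so by concavity `f` cannot rise after `y`
    have := hf.slope_anti_adjacent hx hz hxy hyz
    rw [hfxy, sub_self, zero_div, div_nonpos_iff] at this
    rcases this with ⟨_, h⟩ | ⟨h, _⟩ <;> linarith

theorem ConcaveOn.map_add_le (hf : ConcaveOn ℝ (Ici 0) f) (hf0 : 0 ≤ f 0) {a b : ℝ}
    (ha : 0 ≤ a) (hb : 0 ≤ b) : f (a + b) ≤ f a + f b := by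
  rcases (add_nonneg ha hb).eq_or_lt' with hab | hab
  · obtain ⟨rfl, rfl⟩ : a = 0 ∧ b = 0 := ⟨by linarith, by linarith⟩
    simpa using hf0
  have hsum : a / (a + b) + b / (a + b) = 1 := by field_simp
  have hmem : a + b ∈ Ici (0 : ℝ) := hab.le
  -- `a` and `b` are convex combinations of `0` and `a + b`
  have h₁ := hf.2 hmem self_mem_Ici (div_nonneg ha hab.le) (div_nonneg hb hab.le) hsum
  have h₂ := hf.2 hmem self_mem_Ici (div_nonneg hb hab.le) (div_nonneg ha hab.le)
    (by rw [add_comm, hsum])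
  simp only [smul_eq_mul, mul_zero, add_zero, div_mul_cancel₀ _ hab.ne'] at h₁ h₂
  have hsplit : a / (a + b) * f (a + b) + b / (a + b) * f (a + b) = f (a + b) := by
    rw [← add_mul, hsum, one_mul]
  linarith [mul_nonneg (div_nonneg ha hab.le) hf0, mul_nonneg (div_nonneg hb hab.le) hf0]

end Concave

theorem isMetric_comp_dist {Y : Type*} [MetricSpace Y] {c : ℝ → ℝ}
    (hnonneg : ∀ r, 0 ≤ r → 0 ≤ c r) (hzero : ∀ r, 0 ≤ r → (c r = 0 ↔ r = 0))
    (hmono : MonotoneOn c (Ici 0))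
    (hadd : ∀ a b, 0 ≤ a → 0 ≤ b → c (a + b) ≤ c a + c b) :
    IsMetric fun y y' : Y => c (dist y y') := by
  refine ⟨fun y y' => hnonneg _ dist_nonneg, fun y y' => ?_,
    fun y y' => congrArg c (dist_comm y y'), fun x y z => ?_⟩
  · rw [hzero _ dist_nonneg, dist_eq_zero]
  · calc c (dist x z) ≤ c (dist x y + dist y z) :=
          hmono dist_nonneg (add_nonneg dist_nonneg dist_nonneg) (dist_triangle x y z)
      _ ≤ c (dist x y) + c (dist y z) := hadd _ _ dist_nonneg dist_nonneg

noncomputable def affineEnvelope (w : ℕ → ℝ) (s : ℝ) : ℝ :=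
  ⨅ n : ℕ, ((n : ℝ) + 1 + w n * s)

section AffineEnvelope

variable {w : ℕ → ℝ}

theorem bddBelow_affineEnvelope_terms (hw : ∀ n, 0 ≤ w n) {s : ℝ} (hs : 0 ≤ s) :
    BddBelow (range fun n : ℕ => (n : ℝ) + 1 + w n * s) :=
  ⟨0, by rintro _ ⟨n, rfl⟩; have := hw n; positivity⟩

theorem affineEnvelope_le (hw : ∀ n, 0 ≤ w n) {s : ℝ} (hs : 0 ≤ s) (n : ℕ) :
    affineEnvelope w s ≤ n + 1 + w n * s :=
  ciInf_le (bddBelow_affineEnvelope_terms hw hs) n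

theorem affineEnvelope_zero (hw : ∀ n, 0 ≤ w n) : affineEnvelope w 0 = 1 :=
  le_antisymm (by simpa using affineEnvelope_le hw le_rfl 0)
    (le_ciInf fun n => by simp)

theorem concaveOn_affineEnvelope (hw : ∀ n, 0 ≤ w n) :
    ConcaveOn ℝ (Ici 0) (affineEnvelope w) :=
  concaveOn_ciInf
    (fun n => (concaveOn_const _ (convex_Ici 0)).add ((concaveOn_id (convex_Ici 0)).smul (hw n)))
    fun _ hs => bddBelow_affineEnvelope_terms hw hs

theorem monotoneOn_affineEnvelope (hw : ∀ n, 0 ≤ w n) :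
    MonotoneOn (affineEnvelope w) (Ici 0) :=
  monotoneOn_ciInf
    (fun n _ _ _ _ hst => by have := hw n; gcongr)
    fun _ hs => bddBelow_affineEnvelope_terms hw hs

theorem lipschitzOnWith_affineEnvelope (hw : ∀ n, 0 ≤ w n) (hw₁ : ∀ n, w n ≤ 1) :
    LipschitzOnWith 1 (affineEnvelope w) (Ici 0) := by
  refine lipschitzOnWith_ciInf (fun n => LipschitzOnWith.of_le_add_mul 1 fun s _ t _ => ?_)
    fun _ hs => bddBelow_affineEnvelope_terms hw hs
  rw [Real.dist_eq, NNReal.coe_one, one_mul]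
  nlinarith [mul_nonneg (hw n) (sub_nonneg.2 (le_abs_self (s - t))),
    mul_nonneg (sub_nonneg.2 (hw₁ n)) (abs_nonneg (s - t))]

theorem natCast_le_affineEnvelope (hw : ∀ n, 0 < w n) (hanti : Antitone w) (N : ℕ) :
    (N : ℝ) ≤ affineEnvelope w (N / w N) := by
  refine le_ciInf fun n => ?_
  have hwN := hw N
  rcases le_or_gt n N with hnN | hNn
  · have : (N : ℝ) ≤ w n * (N / w N) := by
      rw [mul_div_assoc', le_div_iff₀ hwN, mul_comm]
      exact mul_le_mul_of_nonneg_right (hanti hnN) N.cast_nonneg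
    linarith [(n.cast_nonneg : (0 : ℝ) ≤ n)]
  · have : (N : ℝ) ≤ n := by exact_mod_cast hNn.le
    have : 0 ≤ w n * (N / w N) := by have := hw n; positivity
    linarith

theorem exists_le_affineEnvelope (hw : ∀ n, 0 < w n) (hanti : Antitone w) (M : ℝ) :
    ∃ s, 0 ≤ s ∧ M ≤ affineEnvelope w s :=
  ⟨⌈M⌉₊ / w ⌈M⌉₊, by have := hw ⌈M⌉₊; positivity,
    (Nat.le_ceil M).trans (natCast_le_affineEnvelope hw hanti _)⟩

end AffineEnvelope

noncomputable def coarseWeight (Φ : ℝ → ℝ) (n : ℕ) : ℝ :=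
  (Φ (n + 1) + 1)⁻¹

section CoarseWeight

variable {Φ : ℝ → ℝ}

theorem coarseWeight_pos (hΦ0 : ∀ r, 0 ≤ r → 0 ≤ Φ r) (n : ℕ) :
    0 < coarseWeight Φ n := by
  have := hΦ0 (n + 1) (by positivity)
  unfold coarseWeight
  positivity

theorem coarseWeight_le_one (hΦ0 : ∀ r, 0 ≤ r → 0 ≤ Φ r) (n : ℕ) :
    coarseWeight Φ n ≤ 1 :=
  inv_le_one_of_one_le₀ (by linarith [hΦ0 (n + 1) (by positivity)])

theorem antitone_coarseWeight (hΦ0 : ∀ r, 0 ≤ r → 0 ≤ Φ r)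
    (hΦmono : MonotoneOn Φ (Ici 0)) : Antitone (coarseWeight Φ) := by
  intro m n hmn
  have := hΦ0 (m + 1) (by positivity)
  have : Φ (m + 1) ≤ Φ (n + 1) :=
    hΦmono (by positivity : (0 : ℝ) ≤ m + 1) (by positivity : (0 : ℝ) ≤ n + 1)
      (by gcongr)
  unfold coarseWeight
  gcongr

theorem affineEnvelope_coarseWeight_le (hΦ0 : ∀ r, 0 ≤ r → 0 ≤ Φ r)
    (hΦmono : MonotoneOn Φ (Ici 0)) {t : ℝ} (ht : 0 ≤ t) :
    affineEnvelope (coarseWeight Φ) (Φ t) ≤ t + 3 := by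
  set n := ⌈t⌉₊
  have hΦt : Φ t ≤ Φ (n + 1) :=
    hΦmono ht (by positivity : (0 : ℝ) ≤ n + 1) (by linarith [Nat.le_ceil t])
  have hweighted : coarseWeight Φ n * Φ t ≤ 1 := by
    rw [coarseWeight, inv_mul_le_one₀ (by linarith [hΦ0 t ht])]
    linarith
  linarith [affineEnvelope_le (fun m => (coarseWeight_pos hΦ0 m).le) (hΦ0 t ht) n,
    Nat.ceil_lt_add_one ht]

end CoarseWeight

theorem stmt_14 (X Y : Type*) [MetricSpace X] [MetricSpace Y] (f : X → Y)
    (Φ : ℝ → ℝ)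
    (hΦ0 : ∀ r, 0 ≤ r → 0 ≤ Φ r) (hΦmono : MonotoneOn Φ (Set.Ici (0 : ℝ)))
    (hcoarse : ∀ x x' : X, dist (f x) (f x') ≤ Φ (dist x x')) :
    ∃ cY : ℝ → ℝ, ∃ A B : ℝ,
      (∀ r, 0 ≤ r → 0 ≤ cY r) ∧ ConcaveOn ℝ (Set.Ici (0 : ℝ)) cY ∧
        StrictMonoOn cY (Set.Ici (0 : ℝ)) ∧ ContinuousOn cY (Set.Ici (0 : ℝ)) ∧
        (∀ M : ℝ, ∃ r, 0 ≤ r ∧ M ≤ cY r) ∧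
        (∀ r, 0 ≤ r → (cY r = 0 ↔ r = 0)) ∧
      IsMetric (fun y y' : Y => cY (dist y y')) ∧
      0 < A ∧ 0 ≤ B ∧
      (∀ x x' : X, cY (dist (f x) (f x')) ≤ A * dist x x' + B) := by
  have hw := coarseWeight_pos hΦ0
  have hw₀ (n : ℕ) : 0 ≤ coarseWeight Φ n := (hw n).le
  set g := affineEnvelope (coarseWeight Φ)
  set cY : ℝ → ℝ := fun s => g s - 1
  have hc0 : cY 0 = 0 := sub_eq_zero.2 (affineEnvelope_zero hw₀)
  have hconc : ConcaveOn ℝ (Ici 0) cY :=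
    (concaveOn_affineEnvelope hw₀).sub (convexOn_const 1 (convex_Ici 0))
  have hunbdd (M : ℝ) : ∃ r, 0 ≤ r ∧ M ≤ cY r :=
    (exists_le_affineEnvelope hw (antitone_coarseWeight hΦ0 hΦmono) (M + 1)).imp
      fun _ ⟨hr, hM⟩ => ⟨hr, le_sub_iff_add_le.2 hM⟩
  have hstrict : StrictMonoOn cY (Ici 0) := by
    refine hconc.strictMonoOn_of_monotoneOn
      (fun s hs t ht hst => sub_le_sub_right (monotoneOn_affineEnvelope hw₀ hs ht hst) 1)
      fun ⟨M, hM⟩ => ?_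
    obtain ⟨r, hr, hMr⟩ := hunbdd (M + 1)
    linarith [hM (mem_image_of_mem cY (mem_Ici.2 hr))]
  have hnonneg (r : ℝ) (hr : 0 ≤ r) : 0 ≤ cY r :=
    hc0 ▸ hstrict.monotoneOn self_mem_Ici hr hr
  have hzero (r : ℝ) (hr : 0 ≤ r) : cY r = 0 ↔ r = 0 := by
    rw [← hstrict.injOn.eq_iff hr self_mem_Ici, hc0]
  refine ⟨cY, 1, 2, hnonneg, hconc, hstrict, ?_, hunbdd, hzero,
    isMetric_comp_dist hnonneg hzero hstrict.monotoneOn fun a b ha hb =>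
      hconc.map_add_le hc0.ge ha hb, one_pos, zero_le_two, fun x x' => ?_⟩
  · exact (lipschitzOnWith_affineEnvelope hw₀ (coarseWeight_le_one hΦ0)).continuousOn.sub
      continuousOn_const
  · calc cY (dist (f x) (f x')) ≤ cY (Φ (dist x x')) :=
          hstrict.monotoneOn dist_nonneg (hΦ0 _ dist_nonneg) (hcoarse x x')
      _ ≤ 1 * dist x x' + 2 := by
          linarith [affineEnvelope_coarseWeight_le hΦ0 hΦmono (dist_nonneg (x := x) (y := x'))]
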